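/- arXiv:2010.05854 — 7 statements merged into one kernel-verified Lean document; each statement's English description precedes it below -/
import Mathlib

section
/- For every integer n ≥ 1 and every real μ > 0, the map Ψ_{n,μ} is a bijection from M_{n,μ} onto ℂ^{n+1}, and Ψ_{n,μ} is infinitely differentiable (C^∞ over ℝ) on the open set M_{n,μ}. -/
/-- `∏ j, (1 - |z j|²)^μ`. -/
noncomputable def prodP (n : ℕ) (μ : ℝ) (z : Fin n → ℂ) : ℝ :=
  ∏ j, (1 - ‖z j‖ ^ 2) ^ μ

/-- The Hartogs–polydisc `M_{n,μ}`. -/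
def hartogsPolydisc (n : ℕ) (μ : ℝ) : Set ((Fin n → ℂ) × ℂ) :=
  {p | (∀ j, ‖p.1 j‖ < 1) ∧ ‖p.2‖ ^ 2 < prodP n μ p.1}

/-- The global coordinates map `Ψ_{n,μ}`. -/
noncomputable def PsiMap (n : ℕ) (μ : ℝ) : (Fin n → ℂ) × ℂ → (Fin n → ℂ) × ℂ :=
  fun p =>
    (Real.sqrt (prodP n μ p.1 - ‖p.2‖ ^ 2))⁻¹ •
      (fun j => (Real.sqrt (μ * prodP n μ p.1) : ℂ) * p.1 j /
          (Real.sqrt (1 - ‖p.1 j‖ ^ 2) : ℂ),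
        p.2)

/-- Explicit inverse of `PsiMap`. -/
noncomputable def PsiInv (n : ℕ) (μ : ℝ) (q : (Fin n → ℂ) × ℂ) : (Fin n → ℂ) × ℂ :=
  (fun j => (Real.sqrt (μ * (1 + ‖q.2‖ ^ 2) + ‖q.1 j‖ ^ 2) : ℂ)⁻¹ * q.1 j,
    (Real.sqrt (prodP n μ
        (fun j => (Real.sqrt (μ * (1 + ‖q.2‖ ^ 2) + ‖q.1 j‖ ^ 2) : ℂ)⁻¹
          * q.1 j) / (1 + ‖q.2‖ ^ 2)) : ℂ) * q.2)

lemma one_sub_abs_sq_pos {z : ℂ} (h : ‖z‖ < 1) :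
    0 < 1 - ‖z‖ ^ 2 := by
  have h0 := norm_nonneg z
  nlinarith

lemma prodP_pos {n : ℕ} {μ : ℝ} {z : Fin n → ℂ} (h : ∀ j, ‖z j‖ < 1) :
    0 < prodP n μ z :=
  Finset.prod_pos fun j _ => Real.rpow_pos_of_pos (one_sub_abs_sq_pos (h j)) μ

lemma abs_real_mul_sq (r : ℝ) (z : ℂ) :
    ‖(r : ℂ) * z‖ ^ 2 = r ^ 2 * ‖z‖ ^ 2 := by
  rw [norm_mul, Complex.norm_real, Real.norm_eq_abs, mul_pow, sq_abs]

lemma aux_identity {μ P s a : ℝ} (hs : s ≠ 0) (ha : 1 - a ≠ 0) :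
    μ * (P / s) + μ * P / (s * (1 - a)) * a = μ * P / (s * (1 - a)) := by
  field_simp
  ring

lemma psiInv_psi {n : ℕ} {μ : ℝ} (hμ : 0 < μ) {p : (Fin n → ℂ) × ℂ}
    (hp : p ∈ hartogsPolydisc n μ) : PsiInv n μ (PsiMap n μ p) = p := by
  obtain ⟨z, w⟩ := p
  obtain ⟨hz, hw⟩ := hp
  set P := prodP n μ z with hPdef
  have hP : 0 < P := prodP_pos hz
  set s := P - ‖w‖ ^ 2 with hsdef
  have hs : 0 < s := sub_pos.2 hw
  have hc : ∀ j, 0 < 1 - ‖z j‖ ^ 2 := fun j => one_sub_abs_sq_pos (hz j)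
  set r : Fin n → ℝ := fun j =>
    Real.sqrt (μ * P) / (Real.sqrt s * Real.sqrt (1 - ‖z j‖ ^ 2)) with hrdef
  have hrpos : ∀ j, 0 < r j := fun j => by
    apply div_pos (Real.sqrt_pos.2 (by positivity)) (mul_pos (Real.sqrt_pos.2 hs)
      (Real.sqrt_pos.2 (hc j)))
  have hr2 : ∀ j, r j ^ 2 = μ * P / (s * (1 - ‖z j‖ ^ 2)) := fun j => by
    rw [hrdef, div_pow, mul_pow, Real.sq_sqrt (by positivity), Real.sq_sqrt hs.le,
      Real.sq_sqrt (hc j).le]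
  have hq : PsiMap n μ (z, w) = (fun j => ((r j : ℝ) : ℂ) * z j,
      ((Real.sqrt s)⁻¹ : ℝ) * w) := by
    refine Prod.ext ?_ ?_
    · funext j
      simp only [PsiMap, Prod.smul_mk, Pi.smul_apply, Complex.real_smul, hrdef]
      push_cast
      ring
    · simp only [PsiMap, Prod.smul_mk, Complex.real_smul]; rfl
  rw [hq]
  -- key absolute value computations
  have habsw : ‖((Real.sqrt s)⁻¹ : ℝ) * w‖ ^ 2 = ‖w‖ ^ 2 / s := by
    rw [abs_real_mul_sq, inv_pow, Real.sq_sqrt hs.le, div_eq_inv_mul]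
  have hone : 1 + ‖((Real.sqrt s)⁻¹ : ℝ) * w‖ ^ 2 = P / s := by
    rw [habsw]; field_simp; rw [hsdef]; ring
  have habsz : ∀ j, ‖((r j : ℝ) : ℂ) * z j‖ ^ 2
      = r j ^ 2 * ‖z j‖ ^ 2 := fun j => abs_real_mul_sq _ _
  have hD : ∀ j, μ * (1 + ‖((Real.sqrt s)⁻¹ : ℝ) * w‖ ^ 2)
      + ‖((r j : ℝ) : ℂ) * z j‖ ^ 2 = r j ^ 2 := by
    intro j
    rw [hone, habsz, hr2]
    exact aux_identity hs.ne' (hc j).ne'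
  have hfst : (fun j => ((Real.sqrt (μ * (1 + ‖((Real.sqrt s)⁻¹ : ℝ) * (w:ℂ)‖ ^ 2)
      + ‖(((r j : ℝ)) : ℂ) * z j‖ ^ 2) : ℝ) : ℂ)⁻¹ * (((r j : ℝ) : ℂ) * z j)) = z := by
    funext j
    rw [hD j, Real.sqrt_sq (hrpos j).le]
    rw [← mul_assoc, inv_mul_cancel₀ (by exact_mod_cast (hrpos j).ne'), one_mul]
  refine Prod.ext ?_ ?_
  · exact hfst
  · show (Real.sqrt (prodP n μ _ / _) : ℂ) * _ = w
    rw [hfst, hone, ← hPdef, div_div_eq_mul_div, mul_comm P s, mul_div_assoc,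
      div_self hP.ne', mul_one]
    show (Real.sqrt s : ℂ) * (((Real.sqrt s)⁻¹ : ℝ) * w) = w
    rw [← mul_assoc, ← Complex.ofReal_mul, mul_inv_cancel₀ (Real.sqrt_ne_zero'.2 hs),
      Complex.ofReal_one, one_mul]

lemma cancel3 (a b c z : ℂ) (ha : a ≠ 0) (hb : b ≠ 0) (hc : c ≠ 0) :
    a⁻¹ * (a * (b * c) * (c⁻¹ * z) / b) = z := by
  field_simp

lemma psiInv_facts {n : ℕ} {μ : ℝ} (hμ : 0 < μ) (q : (Fin n → ℂ) × ℂ) :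
    PsiInv n μ q ∈ hartogsPolydisc n μ ∧ PsiMap n μ (PsiInv n μ q) = q := by
  obtain ⟨ζ, ω⟩ := q
  set A : ℝ := μ * (1 + ‖ω‖ ^ 2) with hAdef
  have hA : 0 < A := by positivity
  set D : Fin n → ℝ := fun j => A + ‖ζ j‖ ^ 2 with hDdef
  have hD : ∀ j, 0 < D j := fun j => by positivity
  set Z : Fin n → ℂ := fun j => ((Real.sqrt (D j) : ℝ) : ℂ)⁻¹ * ζ j with hZdef
  have habsZ : ∀ j, ‖Z j‖ ^ 2 = ‖ζ j‖ ^ 2 / D j := by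
    intro j
    simp only [hZdef]
    rw [← Complex.ofReal_inv, abs_real_mul_sq, inv_pow, Real.sq_sqrt (hD j).le,
      div_eq_inv_mul]
  have hcZ : ∀ j, 1 - ‖Z j‖ ^ 2 = A / D j := by
    intro j
    rw [habsZ j, hDdef]
    field_simp
    ring
  have habsZlt : ∀ j, ‖Z j‖ < 1 := by
    intro j
    have h2 : ‖Z j‖ ^ 2 < 1 := by
      rw [habsZ j]
      exact div_lt_one (hD j) |>.2 (by simp [hDdef]; positivity)
    nlinarith [norm_nonneg (Z j)]
  set P := prodP n μ Z with hPdef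
  have hP : 0 < P := prodP_pos habsZlt
  have hone : 0 < 1 + ‖ω‖ ^ 2 := by positivity
  set W : ℂ := ((Real.sqrt (P / (1 + ‖ω‖ ^ 2)) : ℝ) : ℂ) * ω with hWdef
  have habsW : ‖W‖ ^ 2 = P / (1 + ‖ω‖ ^ 2) * ‖ω‖ ^ 2 := by
    rw [hWdef, abs_real_mul_sq, Real.sq_sqrt (by positivity)]
  have hinv_eq : PsiInv n μ (ζ, ω) = (Z, W) := rfl
  have hWlt : ‖W‖ ^ 2 < P := by
    rw [habsW]
    calc P / (1 + ‖ω‖ ^ 2) * ‖ω‖ ^ 2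
        < P / (1 + ‖ω‖ ^ 2) * (1 + ‖ω‖ ^ 2) := by
          apply mul_lt_mul_of_pos_left (by linarith) (by positivity)
      _ = P := by field_simp
  have hmem : (Z, W) ∈ hartogsPolydisc n μ := ⟨habsZlt, hWlt⟩
  refine ⟨hinv_eq ▸ hmem, ?_⟩
  rw [hinv_eq]
  -- now show PsiMap n μ (Z, W) = (ζ, ω)
  have hs : P - ‖W‖ ^ 2 = P / (1 + ‖ω‖ ^ 2) := by
    rw [habsW]; field_simp; ring
  have hspos : 0 < P - ‖W‖ ^ 2 := sub_pos.2 hWlt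
  refine Prod.ext ?_ ?_
  · funext j
    show (Real.sqrt (prodP n μ Z - ‖W‖ ^ 2))⁻¹ •
      ((Real.sqrt (μ * prodP n μ Z) : ℂ) * Z j / (Real.sqrt (1 - ‖Z j‖ ^ 2) : ℂ))
        = ζ j
    rw [Complex.real_smul, ← hPdef, hcZ j, hs]
    have key : Real.sqrt (μ * P)
        = Real.sqrt (P / (1 + ‖ω‖ ^ 2)) * (Real.sqrt (A / D j) * Real.sqrt (D j)) := by
      rw [← Real.sqrt_mul (by positivity), ← Real.sqrt_mul (by positivity)]
      congr 1
      rw [div_mul_cancel₀ _ (hD j).ne', hAdef, div_mul_eq_mul_div, eq_div_iff hone.ne']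
      ring
    rw [key]
    simp only [hZdef]
    have h1 : ((Real.sqrt (P / (1 + ‖ω‖ ^ 2)) : ℝ) : ℂ) ≠ 0 := by
      exact_mod_cast (Real.sqrt_ne_zero'.2 (by positivity))
    have h2 : ((Real.sqrt (A / D j) : ℝ) : ℂ) ≠ 0 := by
      exact_mod_cast (Real.sqrt_ne_zero'.2 (by positivity))
    have h3 : ((Real.sqrt (D j) : ℝ) : ℂ) ≠ 0 := by
      exact_mod_cast (Real.sqrt_ne_zero'.2 (hD j))
    push_cast
    exact cancel3 _ _ _ _ h1 h2 h3
  · show (Real.sqrt (prodP n μ Z - ‖W‖ ^ 2))⁻¹ • W = ω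
    rw [Complex.real_smul, ← hPdef, hs, hWdef, ← mul_assoc, ← Complex.ofReal_mul,
      inv_mul_cancel₀ (Real.sqrt_ne_zero'.2 (by positivity)),
      Complex.ofReal_one, one_mul]

lemma contDiff_sq_abs {E : Type*} [NormedAddCommGroup E] [NormedSpace ℝ E] {f : E → ℂ}
    (hf : ContDiff ℝ (⊤ : ℕ∞) f) : ContDiff ℝ (⊤ : ℕ∞) fun x => ‖f x‖ ^ 2 := by
  simp only [Complex.sq_norm, Complex.normSq_apply]
  exact ((Complex.reCLM.contDiff.comp hf).mul (Complex.reCLM.contDiff.comp hf)).add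
    ((Complex.imCLM.contDiff.comp hf).mul (Complex.imCLM.contDiff.comp hf))

lemma contDiffAt_prodP {n : ℕ} {μ : ℝ} {p : (Fin n → ℂ) × ℂ}
    (hp : ∀ j, ‖p.1 j‖ < 1) :
    ContDiffAt ℝ (⊤ : ℕ∞) (fun q : (Fin n → ℂ) × ℂ => prodP n μ q.1) p := by
  unfold prodP
  apply contDiffAt_prod
  intro j _
  have hbase : ContDiffAt ℝ (⊤ : ℕ∞) (fun q : (Fin n → ℂ) × ℂ => 1 - ‖q.1 j‖ ^ 2) p :=
    (contDiff_const.sub (contDiff_sq_abs ((contDiff_apply ℝ ℂ j).comp contDiff_fst))).contDiffAt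
  exact (Real.contDiffAt_rpow_const_of_ne
    (ne_of_gt (one_sub_abs_sq_pos (hp j)))).comp p hbase

theorem stmt_2 (n : ℕ) (hn : 1 ≤ n) (μ : ℝ) (hμ : 0 < μ) :
    Set.BijOn (PsiMap n μ) (hartogsPolydisc n μ) Set.univ ∧
      ContDiffOn ℝ (⊤ : ℕ∞) (PsiMap n μ) (hartogsPolydisc n μ) := by
  constructor
  · have hinv : Set.InvOn (PsiInv n μ) (PsiMap n μ) (hartogsPolydisc n μ) Set.univ :=
      ⟨fun p hp => psiInv_psi hμ hp, fun q _ => (psiInv_facts hμ q).2⟩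
    exact hinv.bijOn (Set.mapsTo_univ _ _) (fun q _ => (psiInv_facts hμ q).1)
  · intro p hp
    obtain ⟨hz, hw⟩ := hp
    apply ContDiffAt.contDiffWithinAt
    have hP : 0 < prodP n μ p.1 := prodP_pos hz
    have hs : 0 < prodP n μ p.1 - ‖p.2‖ ^ 2 := sub_pos.2 hw
    have hprod := contDiffAt_prodP (μ := μ) hz
    have habsw : ContDiffAt ℝ (⊤ : ℕ∞) (fun q : (Fin n → ℂ) × ℂ => ‖q.2‖ ^ 2) p :=
      (contDiff_sq_abs contDiff_snd).contDiffAt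
    have hsqrt : ContDiffAt ℝ (⊤ : ℕ∞)
        (fun q : (Fin n → ℂ) × ℂ => Real.sqrt (prodP n μ q.1 - ‖q.2‖ ^ 2)) p :=
      (Real.contDiffAt_sqrt hs.ne').comp p (hprod.sub habsw)
    refine ContDiffAt.smul (hsqrt.inv (Real.sqrt_ne_zero'.2 hs)) ?_
    refine ContDiffAt.prodMk ?_ contDiff_snd.contDiffAt
    rw [contDiffAt_pi]
    intro j
    have hj : ContDiffAt ℝ (⊤ : ℕ∞) (fun q : (Fin n → ℂ) × ℂ => q.1 j) p :=
      ((contDiff_apply ℝ ℂ j).comp contDiff_fst).contDiffAt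
    have hnum : ContDiffAt ℝ (⊤ : ℕ∞)
        (fun q : (Fin n → ℂ) × ℂ => ((Real.sqrt (μ * prodP n μ q.1) : ℝ) : ℂ) * q.1 j) p := by
      refine ContDiffAt.mul ?_ hj
      exact Complex.ofRealCLM.contDiff.contDiffAt.comp p
        ((Real.contDiffAt_sqrt (by positivity)).comp p (contDiffAt_const.mul hprod))
    have hden : ContDiffAt ℝ (⊤ : ℕ∞)
        (fun q : (Fin n → ℂ) × ℂ => ((Real.sqrt (1 - ‖q.1 j‖ ^ 2) : ℝ) : ℂ)) p := by
      refine Complex.ofRealCLM.contDiff.contDiffAt.comp p ?_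
      exact (Real.contDiffAt_sqrt (ne_of_gt (one_sub_abs_sq_pos (hz j)))).comp p
        (contDiff_const.sub (contDiff_sq_abs ((contDiff_apply ℝ ℂ j).comp
          contDiff_fst))).contDiffAt
    have hden0 : ((Real.sqrt (1 - ‖p.1 j‖ ^ 2) : ℝ) : ℂ) ≠ 0 := by
      exact_mod_cast Real.sqrt_ne_zero'.2 (one_sub_abs_sq_pos (hz j))
    simp only [div_eq_mul_inv]
    exact hnum.mul (hden.inv hden0)
end

section
/- For every integer n ≥ 1 and every real μ > 0, every ζ ∈ ℂ^{n+1} with |ζ|² < min{1, μ} lies in the range of Φ_{n,μ}; i.e. the open ball of radius √(min{1,μ}) centered at the origin of ℂ^{n+1} is contained in the image of Φ_{n,μ}. -/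
/-- `∏ j, (1 + |z j|²)^μ`. -/
noncomputable def prodPStar (n : ℕ) (μ : ℝ) (z : Fin n → ℂ) : ℝ :=
  ∏ j, (1 + ‖z j‖ ^ 2) ^ μ

/-- The dual global coordinates map `Φ_{n,μ}`. -/
noncomputable def PhiMap (n : ℕ) (μ : ℝ) : (Fin n → ℂ) × ℂ → (Fin n → ℂ) × ℂ :=
  fun p =>
    (Real.sqrt (prodPStar n μ p.1 + ‖p.2‖ ^ 2))⁻¹ •
      (fun j => (Real.sqrt (μ * prodPStar n μ p.1) : ℂ) * p.1 j /
          (Real.sqrt (1 + ‖p.1 j‖ ^ 2) : ℂ),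
        p.2)

/-!
Write `ζ = (ξ, η)` and `β = |η|²`. Any preimage `(z, w)` satisfies `|η|² = |w|² / (P + |w|²)` with
`P = ∏ (1 + |z_j|²)^μ`, so `w = √(P / (1 - β)) η`, and then the `j`-th coordinate of `Φ(z, w)` is
`√c z_j / √(1 + |z_j|²)` with `c = μ (1 - β)`, independently of `P`. This map of `z_j` is a
bijection of `ℂ` onto the disc `|ξ_j|² < c`, with inverse `ξ ↦ ξ / √(c - |ξ|²)`; the hypothesis
`|ζ|² < min 1 μ` puts every `ξ_j` in that disc.
-/

open Real

lemma lt_mul_one_sub_of_add_lt_min {a b μ : ℝ} (ha : 0 ≤ a) (hb : 0 ≤ b)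
    (h : a + b < min 1 μ) : a < μ * (1 - b) := by
  have h1 : a + b < 1 := h.trans_le (min_le_left _ _)
  have hμ : a + b < μ := h.trans_le (min_le_right _ _)
  rcases le_or_gt μ 1 with hμ1 | hμ1 <;> nlinarith

section Disc

variable {c : ℝ} {ξ : ℂ}

lemma one_add_norm_sq_div_sqrt_sub (hξ : ‖ξ‖ ^ 2 < c) :
    1 + ‖ξ / (√(c - ‖ξ‖ ^ 2) : ℂ)‖ ^ 2 = c / (c - ‖ξ‖ ^ 2) := by
  have hd : 0 < c - ‖ξ‖ ^ 2 := sub_pos.mpr hξ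
  rw [norm_div, Complex.norm_real, norm_of_nonneg (sqrt_nonneg _), div_pow, sq_sqrt hd.le]
  field_simp
  ring

lemma sqrt_mul_div_sqrt_one_add_norm_sq_eq (hξ : ‖ξ‖ ^ 2 < c) :
    (√c : ℂ) * (ξ / (√(c - ‖ξ‖ ^ 2) : ℂ)) /
        (√(1 + ‖ξ / (√(c - ‖ξ‖ ^ 2) : ℂ)‖ ^ 2) : ℂ) = ξ := by
  have hd : 0 < c - ‖ξ‖ ^ 2 := sub_pos.mpr hξ
  have hc : 0 < c := (sq_nonneg _).trans_lt hξ
  rw [one_add_norm_sq_div_sqrt_sub hξ, sqrt_div' _ hd.le]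
  have hsd : (√(c - ‖ξ‖ ^ 2) : ℂ) ≠ 0 := Complex.ofReal_ne_zero.mpr (sqrt_pos.mpr hd).ne'
  have hsc : (√c : ℂ) ≠ 0 := Complex.ofReal_ne_zero.mpr (sqrt_pos.mpr hc).ne'
  push_cast
  field_simp

end Disc

section Scaling

variable {P : ℝ}

lemma add_norm_sq_sqrt_div_mul (hP : 0 ≤ P) {η : ℂ} (hη : ‖η‖ ^ 2 < 1) :
    P + ‖(√(P / (1 - ‖η‖ ^ 2)) : ℂ) * η‖ ^ 2 = P / (1 - ‖η‖ ^ 2) := by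
  have h1η : 0 < 1 - ‖η‖ ^ 2 := sub_pos.mpr hη
  rw [norm_mul, Complex.norm_real, norm_of_nonneg (sqrt_nonneg _), mul_pow,
    sq_sqrt (div_nonneg hP h1η.le)]
  field_simp
  ring

lemma sqrt_mul_eq_sqrt_div_mul_sqrt (hP : 0 ≤ P) {β : ℝ} (hβ : β < 1) (μ : ℝ) :
    √(μ * P) = √(P / (1 - β)) * √(μ * (1 - β)) := by
  have h1β : 0 < 1 - β := sub_pos.mpr hβ
  rw [← sqrt_mul (div_nonneg hP h1β.le)]
  congr 1
  field_simp

end Scaling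

lemma prodPStar_pos (n : ℕ) (μ : ℝ) (z : Fin n → ℂ) : 0 < prodPStar n μ z :=
  Finset.prod_pos fun _ _ => rpow_pos_of_pos (by positivity) _

lemma phiMap_mk_sqrt_div_mul {n : ℕ} (μ : ℝ) (z : Fin n → ℂ) {η : ℂ} (hη : ‖η‖ ^ 2 < 1) :
    PhiMap n μ (z, (√(prodPStar n μ z / (1 - ‖η‖ ^ 2)) : ℂ) * η) =
      (fun j => (√(μ * (1 - ‖η‖ ^ 2)) : ℂ) * z j / (√(1 + ‖z j‖ ^ 2) : ℂ), η) := by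
  have hP := prodPStar_pos n μ z
  have ht : (√(prodPStar n μ z / (1 - ‖η‖ ^ 2)) : ℂ) ≠ 0 :=
    Complex.ofReal_ne_zero.mpr (sqrt_pos.mpr (div_pos hP (sub_pos.mpr hη))).ne'
  simp only [PhiMap, add_norm_sq_sqrt_div_mul hP.le hη,
    sqrt_mul_eq_sqrt_div_mul_sqrt hP.le hη, Prod.smul_mk, Complex.real_smul, Complex.ofReal_inv]
  ext j
  · simp only [Pi.smul_apply, Complex.real_smul, Complex.ofReal_inv]
    push_cast
    field_simp
  · field_simp

theorem stmt_5_general (n : ℕ) (μ : ℝ)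
    (ζ : (Fin n → ℂ) × ℂ)
    (hζ : (∑ j, ‖ζ.1 j‖ ^ 2) + ‖ζ.2‖ ^ 2 < min 1 μ) :
    ζ ∈ Set.range (PhiMap n μ) := by
  obtain ⟨ξ, η⟩ := ζ
  have hS : 0 ≤ ∑ j, ‖ξ j‖ ^ 2 := Finset.sum_nonneg fun _ _ => sq_nonneg _
  have hη : ‖η‖ ^ 2 < 1 := by linarith [hζ.trans_le (min_le_left _ _)]
  have hξ (j : Fin n) : ‖ξ j‖ ^ 2 < μ * (1 - ‖η‖ ^ 2) :=
    (Finset.single_le_sum (fun k _ => sq_nonneg ‖ξ k‖) (Finset.mem_univ j)).trans_lt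
      (lt_mul_one_sub_of_add_lt_min hS (sq_nonneg _) hζ)
  set z : Fin n → ℂ := fun j => ξ j / (√(μ * (1 - ‖η‖ ^ 2) - ‖ξ j‖ ^ 2) : ℂ)
  refine ⟨(z, (√(prodPStar n μ z / (1 - ‖η‖ ^ 2)) : ℂ) * η), ?_⟩
  rw [phiMap_mk_sqrt_div_mul μ z hη]
  ext j
  · exact sqrt_mul_div_sqrt_one_add_norm_sq_eq (hξ j)
  · rfl

theorem stmt_5 (n : ℕ) (hn : 1 ≤ n) (μ : ℝ) (hμ : 0 < μ)
    (ζ : (Fin n → ℂ) × ℂ)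
    (hζ : (∑ j, ‖ζ.1 j‖ ^ 2) + ‖ζ.2‖ ^ 2 < min 1 μ) :
    ζ ∈ Set.range (PhiMap n μ) :=
  stmt_5_general n μ ζ hζ
end

section
/- Let n ≥ 1 be an integer, μ > 0 real, and define φ* : ℂ^{n+1} → ℝ by φ*(z,w) = log(∏_{j=1}^n(1+|z_j|²)^μ + |w|²). Then φ* is strictly plurisubharmonic: for every p ∈ ℂ^{n+1} and every nonzero v ∈ ℂ^{n+1}, the smooth function g : ℝ² → ℝ, g(t,s) = φ*(p + (t + is)·v), has strictly positive Laplacian at the origin, i.e. ∂²g/∂t²(0,0) + ∂²g/∂s²(0,0) > 0. -/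
/-!
Write `φ* = log (exp ψ + ‖w‖²)` with `ψ = μ ∑ log (1 + ‖z_j‖²)`. For `F = exp ψ + ‖w‖²` the
Laplacian of `log F` along a complex line is `(F ΔF - ‖∇F‖²) / F²`, whose numerator expands to
`E (E + b) Δψ + E Q` with `E = exp ψ`, `b = ‖w‖²` and `Q ≥ 0`: the gradient `d` of `‖w + c u‖²`
satisfies `‖d‖² = b Δ‖w + c u‖²`, so `b Q` is a sum of squares. Along the line `ψ` has Laplacian
`4 μ ∑ ‖u_j‖² / (1 + ‖z_j‖²)²`, positive unless the `z`-part of the direction vanishes; then `ψ`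
is constant along the line and the numerator is `E Δ‖w + c u‖² > 0`.
-/

/-- The dual Kähler potential `φ*_{n,μ}(z,w) = log(∏ j (1+|z_j|²)^μ + |w|²)`. -/
noncomputable def dualPotential (n : ℕ) (μ : ℝ) (p : (Fin n → ℂ) × ℂ) : ℝ :=
  Real.log ((∏ j, (1 + ‖p.1 j‖ ^ 2) ^ μ) + ‖p.2‖ ^ 2)

open Real

theorem iteratedDeriv_two_eq_deriv_deriv {𝕜 F : Type*} [NontriviallyNormedField 𝕜]
    [NormedAddCommGroup F] [NormedSpace 𝕜 F] (f : 𝕜 → F) :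
    iteratedDeriv 2 f = deriv (deriv f) := by
  rw [iteratedDeriv_succ, iteratedDeriv_one]

theorem iteratedDeriv_two_log_comp {f : ℝ → ℝ} (hf : ContDiff ℝ 2 f) (hpos : ∀ t, 0 < f t)
    (x : ℝ) :
    iteratedDeriv 2 (fun t => log (f t)) x =
      (iteratedDeriv 2 f x * f x - deriv f x ^ 2) / f x ^ 2 := by
  have hd : Differentiable ℝ f := hf.differentiable two_ne_zero
  have hlog : deriv (fun t => log (f t)) = fun t => deriv f t / f t :=
    funext fun t => deriv.log (hd t) (hpos t).ne'
  rw [iteratedDeriv_two_eq_deriv_deriv, iteratedDeriv_two_eq_deriv_deriv, hlog,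
    deriv_fun_div (hf.differentiable_deriv_two x) (hd x) (hpos x).ne']
  ring

theorem iteratedDeriv_two_exp_comp {f : ℝ → ℝ} (hf : ContDiff ℝ 2 f) (x : ℝ) :
    iteratedDeriv 2 (fun t => exp (f t)) x =
      exp (f x) * (deriv f x ^ 2 + iteratedDeriv 2 f x) := by
  have hd : Differentiable ℝ f := hf.differentiable two_ne_zero
  have hexp : deriv (fun t => exp (f t)) = fun t => exp (f t) * deriv f t :=
    funext fun t => deriv_exp (hd t)
  rw [iteratedDeriv_two_eq_deriv_deriv, iteratedDeriv_two_eq_deriv_deriv, hexp,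
    deriv_fun_mul (hd x).exp (hf.differentiable_deriv_two x), deriv_exp (hd x)]
  ring

theorem iteratedDeriv_two_log_exp_add {ψ R : ℝ → ℝ} (hψ : ContDiff ℝ 2 ψ) (hR : ContDiff ℝ 2 R)
    (hR₀ : ∀ t, 0 ≤ R t) (x : ℝ) :
    iteratedDeriv 2 (fun t => log (exp (ψ t) + R t)) x =
      ((exp (ψ x) * (deriv ψ x ^ 2 + iteratedDeriv 2 ψ x) + iteratedDeriv 2 R x)
          * (exp (ψ x) + R x) - (exp (ψ x) * deriv ψ x + deriv R x) ^ 2)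
        / (exp (ψ x) + R x) ^ 2 := by
  have hexp : ContDiff ℝ 2 fun t => exp (ψ t) := hψ.exp
  rw [iteratedDeriv_two_log_comp (hexp.add hR)
      (fun t => add_pos_of_pos_of_nonneg (exp_pos _) (hR₀ t)),
    iteratedDeriv_fun_add hexp.contDiffAt hR.contDiffAt, iteratedDeriv_two_exp_comp hψ,
    deriv_fun_add (hexp.differentiable two_ne_zero x) (hR.differentiable two_ne_zero x),
    deriv_exp (hψ.differentiable two_ne_zero x)]

section InnerProductSpace

variable {E : Type*} [NormedAddCommGroup E] [InnerProductSpace ℝ E]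

theorem contDiff_norm_add_smul_sq {k : WithTop ℕ∞} (x y : E) :
    ContDiff ℝ k fun t : ℝ => ‖x + t • y‖ ^ 2 :=
  (contDiff_norm_sq ℝ).comp (contDiff_const.add (contDiff_id.smul contDiff_const))

theorem deriv_norm_add_smul_sq (x y : E) :
    deriv (fun t : ℝ => ‖x + t • y‖ ^ 2) = fun t => 2 * inner ℝ (x + t • y) y := by
  funext t
  simpa using (((hasDerivAt_id t).smul_const y).const_add x).norm_sq.deriv

theorem iteratedDeriv_two_norm_add_smul_sq (x y : E) (t : ℝ) :
    iteratedDeriv 2 (fun t : ℝ => ‖x + t • y‖ ^ 2) t = 2 * ‖y‖ ^ 2 := by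
  rw [iteratedDeriv_two_eq_deriv_deriv, deriv_norm_add_smul_sq]
  simp [inner_add_left, inner_smul_left]

end InnerProductSpace

theorem Complex.real_inner_sq_add_real_inner_I_smul_sq (z u : ℂ) :
    inner ℝ z u ^ 2 + inner ℝ z (Complex.I • u) ^ 2 = ‖z‖ ^ 2 * ‖u‖ ^ 2 := by
  rw [Complex.inner, Complex.inner, ← mul_pow, ← norm_mul, ← Complex.normSq_eq_norm_sq,
    Complex.normSq_apply]
  simp only [smul_eq_mul, Complex.mul_re, Complex.mul_im, Complex.I_re, Complex.I_im,
    Complex.conj_re, Complex.conj_im]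
  ring

theorem iteratedDeriv_two_log_one_add_norm_sq_add_I (z u : ℂ) :
    iteratedDeriv 2 (fun t : ℝ => log (1 + ‖z + t • u‖ ^ 2)) 0
      + iteratedDeriv 2 (fun t : ℝ => log (1 + ‖z + t • (Complex.I • u)‖ ^ 2)) 0
      = 4 * ‖u‖ ^ 2 / (1 + ‖z‖ ^ 2) ^ 2 := by
  have hline : ∀ y : ℂ, iteratedDeriv 2 (fun t : ℝ => log (1 + ‖z + t • y‖ ^ 2)) 0
      = (2 * ‖y‖ ^ 2 * (1 + ‖z‖ ^ 2) - 4 * inner ℝ z y ^ 2) / (1 + ‖z‖ ^ 2) ^ 2 := by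
    intro y
    rw [iteratedDeriv_two_log_comp (contDiff_const.add (contDiff_norm_add_smul_sq z y))
      (fun t => by positivity), iteratedDeriv_const_add two_pos,
      iteratedDeriv_two_norm_add_smul_sq, deriv_const_add', deriv_norm_add_smul_sq]
    simp only [zero_smul, add_zero]
    ring
  rw [hline, hline, ← add_div, norm_smul, Complex.norm_I, one_mul]
  field_simp
  linear_combination (-4) * Complex.real_inner_sq_add_real_inner_I_smul_sq z u

theorem laplacian_numerator_pos {E b r S₁ S₂ T₁ T₂ d₁ d₂ : ℝ} (hE : 0 < E) (hb : 0 ≤ b)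
    (hr : 0 ≤ r) (hd : d₁ ^ 2 + d₂ ^ 2 = 2 * b * r) (hT : 0 ≤ T₁ + T₂)
    (h : 0 < T₁ + T₂ ∨ S₁ = 0 ∧ S₂ = 0 ∧ 0 < r) :
    0 < ((E * (S₁ ^ 2 + T₁) + r) * (E + b) - (E * S₁ + d₁) ^ 2) / (E + b) ^ 2
      + ((E * (S₂ ^ 2 + T₂) + r) * (E + b) - (E * S₂ + d₂) ^ 2) / (E + b) ^ 2 := by
  set Q := b * (S₁ ^ 2 + S₂ ^ 2) - 2 * (S₁ * d₁ + S₂ * d₂) + 2 * r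
  have hQ : 0 ≤ Q := by
    rcases hb.eq_or_lt with rfl | hb
    · have hd₀ : d₁ = 0 ∧ d₂ = 0 := by constructor <;> nlinarith
      simp [Q, hd₀.1, hd₀.2, hr]
    · have hbQ : b * Q = (b * S₁ - d₁) ^ 2 + (b * S₂ - d₂) ^ 2 := by
        simp only [Q]; linear_combination -hd
      nlinarith [sq_nonneg (b * S₁ - d₁), sq_nonneg (b * S₂ - d₂)]
  have hsum : ((E * (S₁ ^ 2 + T₁) + r) * (E + b) - (E * S₁ + d₁) ^ 2)
      + ((E * (S₂ ^ 2 + T₂) + r) * (E + b) - (E * S₂ + d₂) ^ 2)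
      = E * (E + b) * (T₁ + T₂) + E * Q := by
    simp only [Q]; linear_combination -hd
  have hEb : 0 < E * (E + b) := mul_pos hE (add_pos_of_pos_of_nonneg hE hb)
  rw [← add_div, hsum]
  refine div_pos ?_ (by positivity)
  rcases h with hT' | ⟨rfl, rfl, hr'⟩
  · nlinarith [mul_pos hEb hT', mul_nonneg hE.le hQ]
  · have hQr : Q = 2 * r := by simp only [Q]; ring
    rw [hQr]
    nlinarith [mul_nonneg hEb.le hT, mul_pos hE hr']

noncomputable def fubiniStudyPotential {ι : Type*} [Fintype ι] (μ : ℝ) (z : ι → ℂ) : ℝ :=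
  μ * ∑ j, log (1 + ‖z j‖ ^ 2)

section FubiniStudy

variable {ι : Type*} [Fintype ι]

theorem contDiff_fubiniStudyPotential_line {k : WithTop ℕ∞} (μ : ℝ) (z u : ι → ℂ) :
    ContDiff ℝ k fun t : ℝ => fubiniStudyPotential μ (z + t • u) :=
  contDiff_const.mul <| ContDiff.sum fun j _ =>
    (contDiff_const.add (contDiff_norm_add_smul_sq (z j) (u j))).log fun t => by positivity

theorem iteratedDeriv_two_fubiniStudyPotential_add_I (μ : ℝ) (z u : ι → ℂ) :
    iteratedDeriv 2 (fun t : ℝ => fubiniStudyPotential μ (z + t • u)) 0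
      + iteratedDeriv 2 (fun t : ℝ => fubiniStudyPotential μ (z + t • (Complex.I • u))) 0
      = μ * ∑ j, 4 * ‖u j‖ ^ 2 / (1 + ‖z j‖ ^ 2) ^ 2 := by
  have hsmooth : ∀ a b : ℂ, ContDiffAt ℝ 2 (fun t : ℝ => log (1 + ‖a + t • b‖ ^ 2)) 0 :=
    fun a b => ((contDiff_const.add (contDiff_norm_add_smul_sq a b)).log
      fun t => by positivity).contDiffAt
  simp only [fubiniStudyPotential, Pi.add_apply, Pi.smul_apply]
  rw [iteratedDeriv_const_mul_field, iteratedDeriv_const_mul_field,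
    iteratedDeriv_fun_sum fun j _ => hsmooth _ _, iteratedDeriv_fun_sum fun j _ => hsmooth _ _,
    ← mul_add, ← Finset.sum_add_distrib]
  congr 1
  exact Finset.sum_congr rfl fun j _ => iteratedDeriv_two_log_one_add_norm_sq_add_I (z j) (u j)

end FubiniStudy

theorem dualPotential_eq_log_exp_fubiniStudyPotential_add (n : ℕ) (μ : ℝ)
    (p : (Fin n → ℂ) × ℂ) :
    dualPotential n μ p = log (exp (fubiniStudyPotential μ p.1) + ‖p.2‖ ^ 2) := by
  rw [dualPotential, fubiniStudyPotential, Finset.mul_sum, exp_sum]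
  congr 2
  refine Finset.prod_congr rfl fun j _ => ?_
  rw [rpow_def_of_pos (by positivity), mul_comm]

theorem iteratedDeriv_two_dualPotential_line (n : ℕ) (μ : ℝ) (p u : (Fin n → ℂ) × ℂ) :
    iteratedDeriv 2 (fun t : ℝ => dualPotential n μ (p + t • u)) 0 =
      let E := exp (fubiniStudyPotential μ p.1)
      let S := deriv (fun t : ℝ => fubiniStudyPotential μ (p.1 + t • u.1)) 0
      let T := iteratedDeriv 2 (fun t : ℝ => fubiniStudyPotential μ (p.1 + t • u.1)) 0
      ((E * (S ^ 2 + T) + 2 * ‖u.2‖ ^ 2) * (E + ‖p.2‖ ^ 2)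
        - (E * S + 2 * inner ℝ p.2 u.2) ^ 2) / (E + ‖p.2‖ ^ 2) ^ 2 := by
  simp only [dualPotential_eq_log_exp_fubiniStudyPotential_add, Prod.fst_add, Prod.snd_add,
    Prod.smul_fst, Prod.smul_snd]
  rw [iteratedDeriv_two_log_exp_add (contDiff_fubiniStudyPotential_line μ p.1 u.1)
    (contDiff_norm_add_smul_sq p.2 u.2) (fun t => by positivity),
    iteratedDeriv_two_norm_add_smul_sq, deriv_norm_add_smul_sq]
  simp

theorem stmt_11_general (n : ℕ) (μ : ℝ) (hμ : 0 < μ)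
    (p : (Fin n → ℂ) × ℂ) (v : (Fin n → ℂ) × ℂ) (hv : v ≠ 0) :
    0 <
      iteratedDeriv 2
          (fun t : ℝ => dualPotential n μ (p + ((t : ℂ) + (0 : ℝ) * Complex.I) • v)) 0 +
        iteratedDeriv 2
          (fun s : ℝ => dualPotential n μ (p + (((0 : ℝ) : ℂ) + (s : ℝ) * Complex.I) • v)) 0 := by
  have hre : ∀ t : ℝ, ((t : ℂ) + (0 : ℝ) * Complex.I) • v = t • v := fun t => by
    simp [Complex.coe_smul]
  have him : ∀ s : ℝ, (((0 : ℝ) : ℂ) + s * Complex.I) • v = s • Complex.I • v := fun s => by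
    simp [Complex.coe_smul, mul_smul]
  simp only [hre, him, iteratedDeriv_two_dualPotential_line, Prod.smul_fst, Prod.smul_snd,
    norm_smul, Complex.norm_I, one_mul]
  have hd : (2 * inner ℝ p.2 v.2) ^ 2 + (2 * inner ℝ p.2 (Complex.I • v.2)) ^ 2
      = 2 * ‖p.2‖ ^ 2 * (2 * ‖v.2‖ ^ 2) := by
    linear_combination 4 * Complex.real_inner_sq_add_real_inner_I_smul_sq p.2 v.2
  have hT := iteratedDeriv_two_fubiniStudyPotential_add_I μ p.1 v.1
  refine laplacian_numerator_pos (exp_pos _) (by positivity) (by positivity) hd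
    (hT ▸ by positivity) ?_
  by_cases hv₁ : v.1 = 0
  · have hv₂ : v.2 ≠ 0 := fun hv₂ => hv (Prod.ext hv₁ hv₂)
    right
    simp [hv₁, hv₂]
  · left
    obtain ⟨j, hj⟩ := Function.ne_iff.mp hv₁
    rw [hT]
    refine mul_pos hμ (Finset.sum_pos' (fun i _ => by positivity) ⟨j, Finset.mem_univ j, ?_⟩)
    have := norm_pos_iff.mpr hj
    positivity

/-- Strict plurisubharmonicity of the dual potential: along every complex line
`c ↦ p + c • v` (`v ≠ 0`) the Laplacian of `φ*` at the origin is strictly positive;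
here the Laplacian of `g(t,s) = φ*(p + (t + is) • v)` at `(0,0)` is written as the sum of
the two second derivatives `∂²g/∂t²(0,0)` and `∂²g/∂s²(0,0)`. -/
theorem stmt_11 (n : ℕ) (hn : 1 ≤ n) (μ : ℝ) (hμ : 0 < μ)
    (p : (Fin n → ℂ) × ℂ) (v : (Fin n → ℂ) × ℂ) (hv : v ≠ 0) :
    0 <
      iteratedDeriv 2
          (fun t : ℝ => dualPotential n μ (p + ((t : ℂ) + (0 : ℝ) * Complex.I) • v)) 0 +
        iteratedDeriv 2
          (fun s : ℝ => dualPotential n μ (p + (((0 : ℝ) : ℂ) + (s : ℝ) * Complex.I) • v)) 0 :=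
  stmt_11_general n μ hμ p v hv
end

section
/- For every integer n ≥ 1 and every real μ > 0, the integral over ℂ^{n+1} ≅ ℝ^{2n+2} with respect to Lebesgue measure of the function (z,w) ↦ μ^n · ∏_{h=1}^n (1+|z_h|²)^{μ(n+1)−2} / ( ∏_{h=1}^n (1+|z_h|²)^μ + |w|² )^{n+2} equals π^{n+1} μ^n / (n+1). -/
/-!
Integrate out `w` first: in polar coordinates `∫_ℂ (A + |w|²)^(-s) dw = π A^(1-s) / (s - 1)`.
With `A = ∏ (1 + |z_h|²)^μ` and `s = n + 2` the `μ`-dependent powers cancel, leaving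
`π μ^n / (n + 1) · ∏ (1 + |z_h|²)^(-2)`, and the integral of each factor over `ℂ` is `π`.
-/

open MeasureTheory Real Set Filter Topology

section Radial

variable {a s : ℝ}

lemma hasDerivAt_rpow_add_sq_div (ha : 0 < a) (hs : s ≠ 1) (x : ℝ) :
    HasDerivAt (fun y : ℝ => (a + y ^ 2) ^ (1 - s) / (2 * (1 - s)))
      (x * (a + x ^ 2) ^ (-s)) x := by
  have hs' : 1 - s ≠ 0 := sub_ne_zero.mpr hs.symm
  have hbase : HasDerivAt (fun y : ℝ => a + y ^ 2) (2 * x) x := by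
    simpa using (hasDerivAt_pow 2 x).const_add a
  refine ((hbase.rpow_const (p := 1 - s) (Or.inl (by positivity))).div_const _).congr_deriv ?_
  rw [show 1 - s - 1 = -s by ring]
  field_simp

lemma tendsto_rpow_add_sq_div_atTop (hs : 1 < s) :
    Tendsto (fun y : ℝ => (a + y ^ 2) ^ (1 - s) / (2 * (1 - s))) atTop (𝓝 0) := by
  have hpow : Tendsto (fun t : ℝ => t ^ (1 - s)) atTop (𝓝 0) := by
    simpa using tendsto_rpow_neg_atTop (by linarith : 0 < s - 1)
  simpa using (hpow.comp (tendsto_atTop_add_const_left _ a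
    (tendsto_pow_atTop two_ne_zero))).div_const (2 * (1 - s))

lemma integral_Ioi_mul_rpow_add_sq (ha : 0 < a) (hs : 1 < s) :
    ∫ y in Ioi (0 : ℝ), y * (a + y ^ 2) ^ (-s) = a ^ (1 - s) / (2 * (s - 1)) := by
  rw [integral_Ioi_of_hasDerivAt_of_nonneg' (fun x _ => hasDerivAt_rpow_add_sq_div ha hs.ne' x)
    (fun x hx => mul_nonneg hx.le (by positivity)) (tendsto_rpow_add_sq_div_atTop hs)]
  have h₁ : s - 1 ≠ 0 := sub_ne_zero.mpr hs.ne'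
  have h₂ : 1 - s ≠ 0 := sub_ne_zero.mpr hs.ne
  rw [zero_pow two_ne_zero, add_zero]
  field_simp
  ring

end Radial

section Plane

variable {a s : ℝ}

lemma integrable_rpow_neg_add_norm_sq {E : Type*} [NormedAddCommGroup E] [InnerProductSpace ℝ E]
    [FiniteDimensional ℝ E] [MeasurableSpace E] [BorelSpace E] {ν : Measure E}
    [ν.IsAddHaarMeasure] (ha : 0 < a) (hs : (Module.finrank ℝ E : ℝ) < 2 * s) :
    Integrable (fun x : E => (a + ‖x‖ ^ 2) ^ (-s)) ν := by
  have hm : 0 < min a 1 := lt_min ha one_pos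
  refine ((integrable_rpow_neg_one_add_norm_sq hs).const_mul (min a 1 ^ (-s))).mono'
    ((by fun_prop : Continuous fun x : E => a + ‖x‖ ^ 2).rpow_const
      fun x => Or.inl (by positivity)).aestronglyMeasurable (Eventually.of_forall fun x => ?_)
  have hs0 : 0 ≤ s := by
    have := (Module.finrank ℝ E).cast_nonneg (α := ℝ); linarith
  have hle : min a 1 * (1 + ‖x‖ ^ 2) ≤ a + ‖x‖ ^ 2 := by
    nlinarith [min_le_left a 1, min_le_right a 1, sq_nonneg ‖x‖]
  rw [norm_of_nonneg (by positivity), show -(2 * s) / 2 = -s by ring,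
    ← mul_rpow hm.le (by positivity)]
  exact rpow_le_rpow_of_nonpos (by positivity) hle (by linarith)

lemma integral_rpow_neg_add_norm_sq (ha : 0 < a) (hs : 1 < s) :
    ∫ w : ℂ, (a + ‖w‖ ^ 2) ^ (-s) = π * a ^ (1 - s) / (s - 1) := by
  rw [integral_fun_norm_addHaar volume (fun y : ℝ => (a + y ^ 2) ^ (-s)),
    Complex.finrank_real_complex, measureReal_def, Complex.volume_ball]
  simp only [ENNReal.coe_toReal, NNReal.coe_real_pi, nsmul_eq_mul,
    Nat.cast_ofNat, smul_eq_mul, ENNReal.ofReal_one, one_pow, one_mul,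
    Nat.add_one_sub_one, pow_one, integral_Ioi_mul_rpow_add_sq ha hs]
  have : s - 1 ≠ 0 := sub_ne_zero.mpr hs.ne'
  field_simp

end Plane

lemma integral_prod_mul_rpow_neg_add_norm_sq {X : Type*} [MeasureSpace X]
    [SFinite (volume : Measure X)] {c A : X → ℝ} {s : ℝ} (hc : Measurable c) (hA : Measurable A)
    (hA₀ : ∀ x, 0 < A x) (hs : 1 < s) (hint : Integrable fun x => c x * A x ^ (1 - s)) :
    ∫ p : X × ℂ, c p.1 * (A p.1 + ‖p.2‖ ^ 2) ^ (-s) =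
      π / (s - 1) * ∫ x, c x * A x ^ (1 - s) := by
  have fiber : ∀ x, ∫ w : ℂ, c x * (A x + ‖w‖ ^ 2) ^ (-s) = π / (s - 1) * (c x * A x ^ (1 - s)) :=
    fun x => by rw [integral_const_mul, integral_rpow_neg_add_norm_sq (hA₀ x) hs]; ring
  have hmeas : Measurable fun p : X × ℂ => c p.1 * (A p.1 + ‖p.2‖ ^ 2) ^ (-s) := by
    fun_prop
  have hF : Integrable (fun p : X × ℂ => c p.1 * (A p.1 + ‖p.2‖ ^ 2) ^ (-s))
      (volume.prod volume) := by
    refine (integrable_prod_iff hmeas.aestronglyMeasurable).2 ⟨Eventually.of_forall fun x => ?_, ?_⟩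
    · refine (integrable_rpow_neg_add_norm_sq (hA₀ x) ?_).const_mul (c x)
      rw [Complex.finrank_real_complex]; push_cast; linarith
    refine (hint.norm.const_mul (π / (s - 1))).congr (Eventually.of_forall fun x => ?_)
    have hnorm : ∀ w : ℂ, ‖c x * (A x + ‖w‖ ^ 2) ^ (-s)‖ = ‖c x‖ * (A x + ‖w‖ ^ 2) ^ (-s) :=
      fun w => by rw [norm_mul, norm_of_nonneg (rpow_nonneg (by have := hA₀ x; positivity) _)]
    simp only [hnorm, integral_const_mul, integral_rpow_neg_add_norm_sq (hA₀ x) hs, norm_mul,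
      norm_of_nonneg (rpow_nonneg (hA₀ x).le _)]
    ring
  rw [Measure.volume_eq_prod, integral_prod _ hF]
  simp_rw [fiber]
  exact integral_const_mul _ _

section Polydisc

variable {ι : Type*} [Fintype ι]

lemma integrable_prod_one_add_norm_sq_rpow_neg_two :
    Integrable fun z : ι → ℂ => ∏ i, (1 + ‖z i‖ ^ 2) ^ (-2 : ℝ) :=
  Integrable.fintype_prod (f := fun _ (w : ℂ) => (1 + ‖w‖ ^ 2) ^ (-2 : ℝ)) fun _ =>
    integrable_rpow_neg_add_norm_sq one_pos (by norm_num [Complex.finrank_real_complex])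

lemma integral_prod_one_add_norm_sq_rpow_neg_two :
    ∫ z : ι → ℂ, ∏ i, (1 + ‖z i‖ ^ 2) ^ (-2 : ℝ) = π ^ Fintype.card ι := by
  rw [volume_pi, integral_fintype_prod_eq_pow (fun w : ℂ => (1 + ‖w‖ ^ 2) ^ (-2 : ℝ)),
    integral_rpow_neg_add_norm_sq one_pos one_lt_two]
  norm_num

end Polydisc

theorem stmt_13_general (n : ℕ) (μ : ℝ) :
    ∫ p : (Fin n → ℂ) × ℂ,
        μ ^ n * (∏ h, (1 + ‖p.1 h‖ ^ 2) ^ (μ * (n + 1) - 2)) /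
          ((∏ h, (1 + ‖p.1 h‖ ^ 2) ^ μ) + ‖p.2‖ ^ 2) ^ (n + 2) =
      Real.pi ^ (n + 1) * μ ^ n / (n + 1) := by
  set c : (Fin n → ℂ) → ℝ := fun z => μ ^ n * ∏ h, (1 + ‖z h‖ ^ 2) ^ (μ * (n + 1) - 2)
  set A : (Fin n → ℂ) → ℝ := fun z => ∏ h, (1 + ‖z h‖ ^ 2) ^ μ
  have hA₀ : ∀ z, 0 < A z := fun z => Finset.prod_pos fun h _ => by positivity
  have hs : (1 : ℝ) < n + 2 := by linarith [n.cast_nonneg (α := ℝ)]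
  have integrand : ∀ p : (Fin n → ℂ) × ℂ,
      c p.1 / (A p.1 + ‖p.2‖ ^ 2) ^ (n + 2) = c p.1 * (A p.1 + ‖p.2‖ ^ 2) ^ (-(n + 2 : ℝ)) :=
    fun p => by
      rw [rpow_neg (by have := hA₀ p.1; positivity), ← div_eq_mul_inv]
      norm_cast
  have fiber_factor : ∀ z, c z * A z ^ (1 - (n + 2 : ℝ)) =
      μ ^ n * ∏ h, (1 + ‖z h‖ ^ 2) ^ (-2 : ℝ) := fun z => by
    rw [← finsetProd_rpow _ _ fun h _ => by positivity, mul_assoc, ← Finset.prod_mul_distrib]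
    congr 1
    refine Finset.prod_congr rfl fun h _ => ?_
    rw [← rpow_mul (by positivity), ← rpow_add (by positivity)]
    ring_nf
  have hint : Integrable fun z => c z * A z ^ (1 - (n + 2 : ℝ)) := by
    simpa only [fiber_factor] using integrable_prod_one_add_norm_sq_rpow_neg_two.const_mul (μ ^ n)
  calc _ = ∫ p : (Fin n → ℂ) × ℂ, c p.1 * (A p.1 + ‖p.2‖ ^ 2) ^ (-(n + 2 : ℝ)) :=
        integral_congr_ae (Eventually.of_forall integrand)
    _ = π / (n + 2 - 1) * ∫ z, c z * A z ^ (1 - (n + 2 : ℝ)) :=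
        integral_prod_mul_rpow_neg_add_norm_sq (by fun_prop) (by fun_prop) hA₀ hs hint
    _ = π ^ (n + 1) * μ ^ n / (n + 1) := by
        simp_rw [fiber_factor]
        rw [integral_const_mul, integral_prod_one_add_norm_sq_rpow_neg_two, Fintype.card_fin]
        ring

theorem stmt_13 (n : ℕ) (hn : 1 ≤ n) (μ : ℝ) (hμ : 0 < μ) :
    ∫ p : (Fin n → ℂ) × ℂ,
        μ ^ n * (∏ h, (1 + ‖p.1 h‖ ^ 2) ^ (μ * (n + 1) - 2)) /
          ((∏ h, (1 + ‖p.1 h‖ ^ 2) ^ μ) + ‖p.2‖ ^ 2) ^ (n + 2) =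
      Real.pi ^ (n + 1) * μ ^ n / (n + 1) :=
  stmt_13_general n μ
end

section
/- Let r ≥ 1 be an integer and let a ≥ 0, b ≥ 0 and γ be real numbers. Then the integral over the unbounded region {λ ∈ ℝ^r : λ_1 > λ_2 > … > λ_r > 0} of ∏_{j=1}^r (1+λ_j²)^{−γ} · ∏_{j=1}^r λ_j^{2b+1} · ∏_{1≤j<k≤r} (λ_j² − λ_k²)^a with respect to Lebesgue measure equals 2^{−r} times the integral over the bounded region {s ∈ ℝ^r : 1 > s_1 > s_2 > … > s_r > 0} of ∏_{j=1}^r (1−s_j)^{γ−2−b−(r−1)a} · ∏_{j=1}^r s_j^{b} · ∏_{1≤j<k≤r} (s_j − s_k)^a, the equality holding as an identity of (possibly infinite) integrals of nonnegative functions. -/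
/-!
The substitution `x_j = √(s_j / (1 - s_j))` (the composite of `x_j² = t_j` and
`t_j = s_j / (1 - s_j)`) is an increasing bijection of `(0, 1)` onto `(0, ∞)`, applied
coordinatewise; it therefore maps the ordered chamber in `(0, 1)ʳ` onto the ordered chamber in
`(0, ∞)ʳ`, with diagonal Jacobian `∏ (2 x_j (1 - s_j)²)⁻¹`. Since `1 + x_j² = (1 - s_j)⁻¹` and
`x_j² - x_k² = (s_j - s_k) / ((1 - s_j)(1 - s_k))`, and each index lies in `r - 1` pairs, the
pulled-back integrand times the Jacobian is `2⁻ʳ` times the integrand in `s`.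
-/

open MeasureTheory Set

theorem Finset.prod_prod_Ioi_mul_self {α M : Type*} [LinearOrder α] [Fintype α]
    [LocallyFiniteOrderTop α] [LocallyFiniteOrderBot α] [CommMonoid M] (c : α → M) :
    ∏ i, ∏ j ∈ Ioi i, c i * c j = ∏ i, c i ^ (Fintype.card α - 1) := by
  classical
  rw [prod_prod_Ioi_mul_eq_prod_prod_off_diag (fun _ j => c j)]
  simp [prod_const, card_compl]

theorem isOpen_setOf_strictAnti {ι α : Type*} [Preorder ι] [Finite ι] [LinearOrder α]
    [TopologicalSpace α] [OrderClosedTopology α] : IsOpen {x : ι → α | StrictAnti x} := by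
  have : {x : ι → α | StrictAnti x} = ⋂ i, ⋂ j, ⋂ (_ : i < j), {x | x j < x i} := by
    ext x
    simp only [StrictAnti, mem_ofPred_eq, mem_iInter]
  rw [this]
  exact isOpen_iInter_of_finite fun i => isOpen_iInter_of_finite fun j =>
    isOpen_iInter_of_finite fun _ => isOpen_lt (continuous_apply j) (continuous_apply i)

theorem isOpen_setOf_strictAnti_and_forall_mem {ι α : Type*} [Preorder ι] [Finite ι]
    [LinearOrder α] [TopologicalSpace α] [OrderClosedTopology α] {U : Set α} (hU : IsOpen U) :
    IsOpen {x : ι → α | StrictAnti x ∧ ∀ i, x i ∈ U} := by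
  rw [ofPred_and, ofPred_forall]
  exact isOpen_setOf_strictAnti.inter
    (isOpen_iInter_of_finite fun i => hU.preimage (continuous_apply i))

theorem StrictMonoOn.image_setOf_strictAnti {ι α β : Type*} [Preorder ι] [LinearOrder α]
    [Preorder β] {g : α → β} {I : Set α} (hg : StrictMonoOn g I) :
    (fun s i => g (s i)) '' {s : ι → α | StrictAnti s ∧ ∀ i, s i ∈ I} =
      {x | StrictAnti x ∧ ∀ i, x i ∈ g '' I} := by
  ext x
  constructor
  · rintro ⟨s, ⟨hs, hsI⟩, rfl⟩
    exact ⟨fun i j hij => hg (hsI j) (hsI i) (hs hij), fun i => mem_image_of_mem g (hsI i)⟩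
  · rintro ⟨hx, hxI⟩
    choose s hsI hgs using hxI
    refine ⟨s, ⟨fun i j hij => ?_, hsI⟩, funext hgs⟩
    rw [← hg.lt_iff_lt (hsI j) (hsI i), hgs, hgs]
    exact hx hij

theorem lintegral_image_comp_eq_lintegral_abs_prod_deriv_mul {ι : Type*} [Fintype ι]
    {g g' : ℝ → ℝ} {U : Set ℝ} {S : Set (ι → ℝ)} (hS : MeasurableSet S)
    (hSU : ∀ s ∈ S, ∀ i, s i ∈ U) (hg : ∀ t ∈ U, HasDerivAt g (g' t) t) (hinj : InjOn g U)
    (f : (ι → ℝ) → ENNReal) :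
    ∫⁻ x in (fun s i => g (s i)) '' S, f x =
      ∫⁻ s in S, ENNReal.ofReal |∏ i, g' (s i)| * f (fun i => g (s i)) := by
  classical
  let Dg (s : ι → ℝ) : (ι → ℝ) →L[ℝ] ι → ℝ :=
    (Matrix.toLin' (Matrix.diagonal fun i => g' (s i))).toContinuousLinearMap
  have hDg : ∀ s ∈ S, HasFDerivWithinAt (fun s i => g (s i)) (Dg s) S s := by
    intro s hs
    refine (hasFDerivAt_pi'' fun i => ?_).hasFDerivWithinAt
    have hgi : HasDerivAt g (g' (s i)) ((fun s : ι → ℝ => s i) s) := hg _ (hSU s hs i)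
    have hgi' : HasFDerivAt (fun s : ι → ℝ => g (s i))
        (g' (s i) • ContinuousLinearMap.proj i) s :=
      HasDerivAt.comp_hasFDerivAt (𝕜 := ℝ) s hgi (hasFDerivAt_apply i s)
    refine hgi'.congr_fderiv ?_
    ext v
    simp [Dg, Matrix.mulVec_diagonal]
  have hinjS : InjOn (fun s i => g (s i)) S := fun s hs t ht hst =>
    funext fun i => hinj (hSU s hs i) (hSU t ht i) (congrFun hst i)
  rw [lintegral_image_eq_lintegral_abs_det_fderiv_mul volume hS hDg hinjS]
  congr! with s
  simp [Dg, LinearMap.det_toLin']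

noncomputable def sqrtOdds (t : ℝ) : ℝ := √(t / (1 - t))

theorem sqrtOdds_pos {t : ℝ} (ht : t ∈ Ioo 0 1) : 0 < sqrtOdds t :=
  Real.sqrt_pos.2 (div_pos ht.1 (sub_pos.2 ht.2))

theorem sqrtOdds_sq {t : ℝ} (ht : t ∈ Ioo 0 1) : sqrtOdds t ^ 2 = t / (1 - t) :=
  Real.sq_sqrt (div_nonneg ht.1.le (sub_nonneg.2 ht.2.le))

theorem strictMonoOn_sqrtOdds : StrictMonoOn sqrtOdds (Ioo 0 1) := by
  intro s hs t ht hst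
  apply Real.sqrt_lt_sqrt (div_nonneg hs.1.le (sub_pos.2 hs.2).le)
  rw [div_lt_div_iff₀ (sub_pos.2 hs.2) (sub_pos.2 ht.2)]
  nlinarith

theorem sqrtOdds_image_Ioo : sqrtOdds '' Ioo 0 1 = Ioi 0 := by
  refine Subset.antisymm (image_subset_iff.2 fun t ht => sqrtOdds_pos ht) fun x hx => ?_
  have hx : 0 < x := hx
  have h1x : 0 < 1 + x ^ 2 := by positivity
  refine ⟨x ^ 2 / (1 + x ^ 2), ⟨by positivity, (div_lt_one h1x).2 (by linarith)⟩, ?_⟩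
  rw [sqrtOdds, show x ^ 2 / (1 + x ^ 2) / (1 - x ^ 2 / (1 + x ^ 2)) = x ^ 2 by
    field_simp; ring]
  exact Real.sqrt_sq hx.le

theorem hasDerivAt_sqrtOdds {t : ℝ} (ht : t ∈ Ioo 0 1) :
    HasDerivAt sqrtOdds (2 * sqrtOdds t * (1 - t) ^ 2)⁻¹ t := by
  have h1t : 1 - t ≠ 0 := (sub_pos.2 ht.2).ne'
  have hodds : HasDerivAt (fun t : ℝ => t / (1 - t)) ((1 - t) ^ 2)⁻¹ t :=
    ((hasDerivAt_id t).div ((hasDerivAt_id t).const_sub 1) h1t).congr_deriv (by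
      simp only [id]; field_simp; ring)
  refine (hodds.sqrt (div_pos ht.1 (sub_pos.2 ht.2)).ne').congr_deriv ?_
  rw [sqrtOdds]
  field_simp

theorem one_add_sqrtOdds_sq {t : ℝ} (ht : t ∈ Ioo 0 1) : 1 + sqrtOdds t ^ 2 = (1 - t)⁻¹ := by
  have : 1 - t ≠ 0 := (sub_pos.2 ht.2).ne'
  rw [sqrtOdds_sq ht]
  field_simp
  ring

theorem sqrtOdds_sq_sub_sq {s t : ℝ} (hs : s ∈ Ioo 0 1) (ht : t ∈ Ioo 0 1) :
    sqrtOdds s ^ 2 - sqrtOdds t ^ 2 = (s - t) * ((1 - s)⁻¹ * (1 - t)⁻¹) := by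
  have : 1 - s ≠ 0 := (sub_pos.2 hs.2).ne'
  have : 1 - t ≠ 0 := (sub_pos.2 ht.2).ne'
  rw [sqrtOdds_sq hs, sqrtOdds_sq ht]
  field_simp
  ring

theorem sqrtOdds_sq_sub_sq_rpow (a : ℝ) {s t : ℝ} (hs : s ∈ Ioo 0 1) (ht : t ∈ Ioo 0 1)
    (hts : t ≤ s) :
    (sqrtOdds s ^ 2 - sqrtOdds t ^ 2) ^ a = (s - t) ^ a * ((1 - s) ^ (-a) * (1 - t) ^ (-a)) := by
  have hws : 0 ≤ 1 - s := (sub_pos.2 hs.2).le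
  have hwt : 0 ≤ 1 - t := (sub_pos.2 ht.2).le
  rw [sqrtOdds_sq_sub_sq hs ht, Real.mul_rpow (sub_nonneg.2 hts) (by positivity),
    Real.mul_rpow (inv_nonneg.2 hws) (inv_nonneg.2 hwt), Real.inv_rpow hws, Real.inv_rpow hwt,
    Real.rpow_neg hws, Real.rpow_neg hwt]

theorem sqrtOdds_factor_mul_abs_deriv (a b γ : ℝ) (n : ℕ) {t : ℝ} (ht : t ∈ Ioo 0 1) :
    (1 + sqrtOdds t ^ 2) ^ (-γ) * sqrtOdds t ^ (2 * b + 1) * ((1 - t) ^ (-a)) ^ n *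
        |(2 * sqrtOdds t * (1 - t) ^ 2)⁻¹| =
      2⁻¹ * (1 - t) ^ (γ - 2 - b - n * a) * t ^ b := by
  have hw : 0 < 1 - t := sub_pos.2 ht.2
  have hg := sqrtOdds_pos ht
  have hγ : (1 + sqrtOdds t ^ 2) ^ (-γ) = (1 - t) ^ γ := by
    rw [one_add_sqrtOdds_sq ht, Real.inv_rpow hw.le, Real.rpow_neg hw.le, inv_inv]
  have hb : sqrtOdds t ^ (2 * b + 1) = t ^ b * (1 - t) ^ (-b) * sqrtOdds t := by
    rw [Real.rpow_add_one hg.ne', Real.rpow_mul hg.le, Real.rpow_two, sqrtOdds_sq ht,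
      Real.div_rpow ht.1.le hw.le, Real.rpow_neg hw.le, div_eq_mul_inv]
  have ha : ((1 - t) ^ (-a)) ^ n = (1 - t) ^ (-(n * a)) := by
    rw [← Real.rpow_natCast, ← Real.rpow_mul hw.le]
    ring_nf
  have hexp : (1 - t) ^ (γ - 2 - b - n * a) =
      (1 - t) ^ γ * (1 - t) ^ (-b) * (1 - t) ^ (-(n * a)) * ((1 - t) ^ 2)⁻¹ := by
    rw [← Real.rpow_add hw, ← Real.rpow_add hw, ← Real.rpow_two, ← Real.rpow_neg hw.le,
      ← Real.rpow_add hw]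
    ring_nf
  rw [hγ, hb, ha, hexp, abs_of_pos (by positivity)]
  field_simp

theorem abs_prod_deriv_sqrtOdds_mul_integrand {r : ℕ} (a b γ : ℝ) {s : Fin r → ℝ}
    (hs : StrictAnti s) (hs01 : ∀ j, s j ∈ Ioo 0 1) :
    |∏ j, (2 * sqrtOdds (s j) * (1 - s j) ^ 2)⁻¹| *
        ((∏ j, (1 + sqrtOdds (s j) ^ 2) ^ (-γ)) * (∏ j, sqrtOdds (s j) ^ (2 * b + 1)) *
          ∏ j, ∏ k ∈ Finset.Ioi j, (sqrtOdds (s j) ^ 2 - sqrtOdds (s k) ^ 2) ^ a) =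
      2⁻¹ ^ r * ((∏ j, (1 - s j) ^ (γ - 2 - b - ((r : ℝ) - 1) * a)) * (∏ j, s j ^ b) *
          ∏ j, ∏ k ∈ Finset.Ioi j, (s j - s k) ^ a) := by
  have hpair : ∏ j, ∏ k ∈ Finset.Ioi j, (sqrtOdds (s j) ^ 2 - sqrtOdds (s k) ^ 2) ^ a =
      (∏ j, ∏ k ∈ Finset.Ioi j, (s j - s k) ^ a) * ∏ j, ((1 - s j) ^ (-a)) ^ (r - 1) := by
    have hc := Finset.prod_prod_Ioi_mul_self fun j => (1 - s j) ^ (-a)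
    rw [Fintype.card_fin] at hc
    rw [← hc, ← Finset.prod_mul_distrib]
    refine Finset.prod_congr rfl fun j _ => ?_
    rw [← Finset.prod_mul_distrib]
    exact Finset.prod_congr rfl fun k hk =>
      sqrtOdds_sq_sub_sq_rpow a (hs01 j) (hs01 k) (hs (Finset.mem_Ioi.1 hk)).le
  have hfactor : ∀ j : Fin r, (1 + sqrtOdds (s j) ^ 2) ^ (-γ) * sqrtOdds (s j) ^ (2 * b + 1) *
      ((1 - s j) ^ (-a)) ^ (r - 1) * |(2 * sqrtOdds (s j) * (1 - s j) ^ 2)⁻¹| =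
      2⁻¹ * (1 - s j) ^ (γ - 2 - b - ((r : ℝ) - 1) * a) * s j ^ b := fun j => by
    -- `j` witnesses `0 < r`, so the truncated `r - 1` casts to `(r : ℝ) - 1`
    rw [sqrtOdds_factor_mul_abs_deriv a b γ (r - 1) (hs01 j), Nat.cast_pred j.pos]
  rw [hpair, Finset.abs_prod]
  calc _ = (∏ j, ((1 + sqrtOdds (s j) ^ 2) ^ (-γ) * sqrtOdds (s j) ^ (2 * b + 1) *
          ((1 - s j) ^ (-a)) ^ (r - 1) * |(2 * sqrtOdds (s j) * (1 - s j) ^ 2)⁻¹|)) *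
          ∏ j, ∏ k ∈ Finset.Ioi j, (s j - s k) ^ a := by
        simp only [Finset.prod_mul_distrib]; ring
    _ = _ := by
        simp only [hfactor, Finset.prod_mul_distrib, Finset.prod_const, Finset.card_univ,
          Fintype.card_fin]
        ring

theorem stmt_14_general (r : ℕ) (a b γ : ℝ) :
    (∫⁻ x in {x : Fin r → ℝ | StrictAnti x ∧ ∀ j, 0 < x j},
        ENNReal.ofReal
          ((∏ j, (1 + x j ^ 2) ^ (-γ)) * (∏ j, (x j) ^ (2 * b + 1)) *
            ∏ j, ∏ k ∈ Finset.Ioi j, ((x j) ^ 2 - (x k) ^ 2) ^ a)) =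
      (2 : ENNReal)⁻¹ ^ r *
        ∫⁻ s in {s : Fin r → ℝ | StrictAnti s ∧ (∀ j, 0 < s j) ∧ ∀ j, s j < 1},
          ENNReal.ofReal
            ((∏ j, (1 - s j) ^ (γ - 2 - b - ((r : ℝ) - 1) * a)) * (∏ j, (s j) ^ b) *
              ∏ j, ∏ k ∈ Finset.Ioi j, (s j - s k) ^ a) := by
  have hdomain : {s : Fin r → ℝ | StrictAnti s ∧ (∀ j, 0 < s j) ∧ ∀ j, s j < 1} =
      {s | StrictAnti s ∧ ∀ j, s j ∈ Ioo 0 1} := by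
    ext s
    simp only [mem_ofPred_eq, mem_Ioo, forall_and]
  have himage : {x : Fin r → ℝ | StrictAnti x ∧ ∀ j, 0 < x j} =
      (fun s j => sqrtOdds (s j)) '' {s | StrictAnti s ∧ ∀ j, s j ∈ Ioo 0 1} := by
    rw [strictMonoOn_sqrtOdds.image_setOf_strictAnti, sqrtOdds_image_Ioo]
    rfl
  have hmeas : MeasurableSet {s : Fin r → ℝ | StrictAnti s ∧ ∀ j, s j ∈ Ioo 0 1} :=
    (isOpen_setOf_strictAnti_and_forall_mem isOpen_Ioo).measurableSet
  rw [hdomain, himage, lintegral_image_comp_eq_lintegral_abs_prod_deriv_mul hmeas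
    (fun s hs => hs.2) (fun t ht => hasDerivAt_sqrtOdds ht) strictMonoOn_sqrtOdds.injOn,
    ← lintegral_const_mul' _ _ (by simp)]
  refine setLIntegral_congr_fun hmeas fun s hs => ?_
  rw [← ENNReal.ofReal_mul (abs_nonneg _), abs_prod_deriv_sqrtOdds_mul_integrand a b γ hs.1 hs.2,
    ENNReal.ofReal_mul (by positivity), ENNReal.ofReal_pow (by norm_num),
    ENNReal.ofReal_inv_of_pos two_pos, ENNReal.ofReal_ofNat]

theorem stmt_14 (r : ℕ) (hr : 1 ≤ r) (a b γ : ℝ) (ha : 0 ≤ a) (hb : 0 ≤ b) :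
    (∫⁻ x in {x : Fin r → ℝ | StrictAnti x ∧ ∀ j, 0 < x j},
        ENNReal.ofReal
          ((∏ j, (1 + x j ^ 2) ^ (-γ)) * (∏ j, (x j) ^ (2 * b + 1)) *
            ∏ j, ∏ k ∈ Finset.Ioi j, ((x j) ^ 2 - (x k) ^ 2) ^ a)) =
      (2 : ENNReal)⁻¹ ^ r *
        ∫⁻ s in {s : Fin r → ℝ | StrictAnti s ∧ (∀ j, 0 < s j) ∧ ∀ j, s j < 1},
          ENNReal.ofReal
            ((∏ j, (1 - s j) ^ (γ - 2 - b - ((r : ℝ) - 1) * a)) * (∏ j, (s j) ^ b) *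
              ∏ j, ∏ k ∈ Finset.Ioi j, (s j - s k) ^ a) :=
  stmt_14_general r a b γ
end

section
/- Let r ≥ 1 be an integer, let a ≥ 0 and b ≥ 0 be real numbers, and set n = r(b + 1 + (a/2)(r−1)). Then ∏_{j=1}^r (1 + (j−1)a/2) / (b + 2 + (r+j−2)a/2) ≤ 1/(n+1), with equality if and only if r = 1. -/
lemma aux_prod_gt (m : ℕ) (hm : 1 ≤ m) (c D : ℝ) (hc : 0 ≤ c) (hD : 1 ≤ D)
    (hgap : (m : ℝ) * c + 1 ≤ D) :
    ((m : ℝ) + 1) * D + 1 < ∏ j ∈ Finset.range (m + 1), (1 + D / (1 + (j : ℝ) * c)) := by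
  have hmc : (0:ℝ) < 1 + (m:ℝ) * c := by positivity
  set t : ℝ := D / (1 + (m:ℝ) * c) with ht
  have htpos : 0 < t := by positivity
  have hm1 : (1:ℝ) ≤ (m:ℝ) := by exact_mod_cast hm
  have hQ : ∏ j ∈ Finset.range (m + 1), (1 + D / (1 + (j : ℝ) * c))
      = (1 + D) * ∏ j ∈ Finset.range m, (1 + D / (1 + ((j:ℝ) + 1) * c)) := by
    rw [Finset.prod_range_succ', mul_comm]
    congr 1
    · norm_num
    · exact Finset.prod_congr rfl fun j _ => by push_cast; ring_nf
  have hstep : (1 + t) ^ m ≤ ∏ j ∈ Finset.range m, (1 + D / (1 + ((j:ℝ) + 1) * c)) := by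
    calc (1 + t) ^ m = ∏ _j ∈ Finset.range m, (1 + t) := by
          rw [Finset.prod_const, Finset.card_range]
      _ ≤ _ := by
          apply Finset.prod_le_prod
          · intro j _; positivity
          · intro j hj
            have hj' : (j:ℝ) + 1 ≤ (m:ℝ) := by
              have := Finset.mem_range.mp hj; exact_mod_cast this
            have h1 : (0:ℝ) < 1 + ((j:ℝ) + 1) * c := by positivity
            gcongr
            rw [ht]
            exact div_le_div_of_nonneg_left (by linarith) h1 (by nlinarith)
  have hbern : 1 + (m:ℝ) * t ≤ (1 + t) ^ m := by
    have := one_add_mul_le_pow (by linarith : (-2:ℝ) ≤ t) m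
    linarith
  have ht2 : t * (1 + (m:ℝ)*c) = D := div_mul_cancel₀ D (ne_of_gt hmc)
  have expand : (1+D)*(1+(m:ℝ)*t) - (((m:ℝ)+1)*D+1) = (m:ℝ)*t*(D - (m:ℝ)*c) := by
    linear_combination (m:ℝ) * ht2
  have hkey : ((m:ℝ) + 1) * D + 1 < (1 + D) * (1 + (m:ℝ) * t) := by
    have hpos : 0 < (m:ℝ)*t*(D - (m:ℝ)*c) :=
      mul_pos (mul_pos (by linarith) htpos) (by linarith)
    linarith [expand]
  have h1t : (0:ℝ) < 1 + t := by linarith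
  calc ((m:ℝ)+1)*D + 1 < (1+D)*(1+(m:ℝ)*t) := hkey
    _ ≤ (1+D)*(1+t)^m := by gcongr
    _ ≤ _ := by rw [hQ]; gcongr

theorem stmt_15 (r : ℕ) (hr : 1 ≤ r) (a b : ℝ) (ha : 0 ≤ a) (hb : 0 ≤ b) :
    (∏ j ∈ Finset.range r,
        (1 + (j : ℝ) * (a / 2)) / (b + 2 + ((r : ℝ) - 1 + (j : ℝ)) * (a / 2))) ≤
        1 / ((r : ℝ) * (b + 1 + (a / 2) * ((r : ℝ) - 1)) + 1) ∧
      ((∏ j ∈ Finset.range r,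
          (1 + (j : ℝ) * (a / 2)) / (b + 2 + ((r : ℝ) - 1 + (j : ℝ)) * (a / 2))) =
          1 / ((r : ℝ) * (b + 1 + (a / 2) * ((r : ℝ) - 1)) + 1) ↔ r = 1) := by
  set c := a / 2 with hcdef
  have hc : 0 ≤ c := by positivity
  set D : ℝ := b + 1 + ((r : ℝ) - 1) * c with hDdef
  have hr1 : (1:ℝ) ≤ (r:ℝ) := by exact_mod_cast hr
  have hD : 1 ≤ D := by rw [hDdef]; nlinarith
  have hterm : ∀ j ∈ Finset.range r,
      (1 + (j:ℝ) * c) / (b + 2 + ((r:ℝ) - 1 + (j:ℝ)) * c)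
        = (1 + D / (1 + (j:ℝ) * c))⁻¹ := by
    intro j _
    have hx : (0:ℝ) < 1 + (j:ℝ) * c := by positivity
    have hden : b + 2 + ((r:ℝ) - 1 + (j:ℝ)) * c = (1 + (j:ℝ)*c) + D := by
      rw [hDdef]; ring
    rw [hden, show 1 + D/(1+(j:ℝ)*c) = ((1+(j:ℝ)*c) + D)/(1+(j:ℝ)*c) by field_simp,
      inv_div]
  have hP : (∏ j ∈ Finset.range r, (1 + (j:ℝ)*c) / (b + 2 + ((r:ℝ)-1+(j:ℝ))*c))
      = (∏ j ∈ Finset.range r, (1 + D/(1+(j:ℝ)*c)))⁻¹ := by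
    rw [Finset.prod_congr rfl hterm, ← Finset.prod_inv_distrib]
  rcases eq_or_lt_of_le hr with h1 | h2
  · obtain rfl : r = 1 := h1.symm
    have hEq : (∏ j ∈ Finset.range 1,
        (1 + (j : ℝ) * c) / (b + 2 + ((1 : ℝ) - 1 + (j : ℝ)) * c)) =
        1 / ((1 : ℝ) * (b + 1 + c * ((1 : ℝ) - 1)) + 1) := by
      rw [Finset.prod_range_one]
      push_cast
      rw [one_div]
      norm_num
      ring
    refine ⟨le_of_eq ?_, ?_⟩
    · convert hEq using 3 <;> push_cast <;> ring
    · constructor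
      · intro _; rfl
      · intro _
        convert hEq using 3 <;> push_cast <;> ring
  · obtain ⟨m, rfl⟩ : ∃ m, r = m + 1 := ⟨r - 1, by omega⟩
    have hm : 1 ≤ m := by omega
    have hDm : D = b + 1 + (m:ℝ)*c := by rw [hDdef]; push_cast; ring
    have hgap : (m:ℝ)*c + 1 ≤ D := by rw [hDm]; linarith
    have hQ := aux_prod_gt m hm c D hc hD hgap
    have hn : (0:ℝ) < ((m:ℝ)+1)*D+1 := by positivity
    have hRHSeq : ((m+1:ℕ):ℝ)*(b+1+c*(((m+1:ℕ):ℝ)-1))+1 = ((m:ℝ)+1)*D+1 := by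
      rw [hDdef]; push_cast; ring
    have hcast : ∏ j ∈ Finset.range (m+1),
        (1 + (j:ℝ)*c) / (b + 2 + (((m+1:ℕ):ℝ)-1+(j:ℝ))*c)
        = (∏ j ∈ Finset.range (m+1), (1 + D/(1+(j:ℝ)*c)))⁻¹ := hP
    have hlt : (∏ j ∈ Finset.range (m+1), (1 + D/(1+(j:ℝ)*c)))⁻¹
        < (((m:ℝ)+1)*D+1)⁻¹ := by
      exact (inv_strictAnti₀ hn hQ)
    constructor
    · rw [hcast, hRHSeq, one_div]
      exact le_of_lt hlt
    · constructor
      · intro hEq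
        rw [hcast, hRHSeq, one_div] at hEq
        exact absurd hEq (ne_of_lt hlt)
      · intro h; omega
end

section
/- Let r ≥ 2 be an integer, let a ≥ 0 and b ≥ 0 be real numbers, and set n = r(b + 1 + (a/2)(r−1)). If μ > 0 satisfies ∏_{j=1}^r [Γ(μ+1+(j−1)a/2) · Γ(b+2+(r+j−2)a/2)] / [Γ(1+(j−1)a/2) · Γ(μ+b+2+(r+j−2)a/2)] = μ^n/(n+1) (with μ^n the real power μ^n), then μ < 1. -/
/-!
Suppose `μ ≥ 1`. Put `t = a/2`, `p_j = 1 + j t` and `s = b + 1 + (r - 1) t`, so that `n = r s`.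
By log-convexity of `Γ`, the `j`-th factor `Γ(μ + p_j) Γ(p_j + s) / (Γ(p_j) Γ(μ + p_j + s))`
decreases in `μ`, hence is at most its value `p_j / (p_j + s)` at `μ = 1`. Since `t < s` and
`r ≥ 2`, an induction on `r` gives `∏ p_j / (p_j + s) < 1 / (r s + 1) = 1 / (n + 1)`,
while `μ ^ n / (n + 1) ≥ 1 / (n + 1)`.
-/

open Finset

theorem ConvexOn.map_add_map_le_of_add_eq {s : Set ℝ} {f : ℝ → ℝ} (hf : ConvexOn ℝ s f)
    {A B x y : ℝ} (hA : A ∈ s) (hB : B ∈ s) (hAx : A ≤ x) (hxB : x ≤ B) (hxy : x + y = A + B) :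
    f x + f y ≤ f A + f B := by
  set θ := (x - A) / (B - A)
  have hθ : θ * (B - A) = x - A := div_mul_cancel_of_imp fun h => by linarith
  have hθ0 : 0 ≤ θ := div_nonneg (by linarith) (by linarith)
  have hθ1 : θ ≤ 1 := div_le_one_of_le₀ (by linarith) (by linarith)
  have hx := hf.2 hA hB (sub_nonneg.2 hθ1) hθ0 (sub_add_cancel 1 θ)
  have hy := hf.2 hA hB hθ0 (sub_nonneg.2 hθ1) (add_sub_cancel θ 1)
  simp only [smul_eq_mul] at hx hy
  rw [show (1 - θ) * A + θ * B = x by linarith] at hx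
  rw [show θ * A + (1 - θ) * B = y by linarith] at hy
  linarith

namespace Real

theorem Gamma_mul_Gamma_le_of_add_eq {A B x y : ℝ} (hA : 0 < A) (hAx : A ≤ x) (hxB : x ≤ B)
    (hxy : x + y = A + B) : Gamma x * Gamma y ≤ Gamma A * Gamma B := by
  have hx : 0 < x := hA.trans_le hAx
  have hy : 0 < y := by linarith
  have hB : 0 < B := hx.trans_le hxB
  have hlog := convexOn_log_Gamma.map_add_map_le_of_add_eq hA hB hAx hxB hxy
  simp only [Function.comp_apply] at hlog
  rw [← log_mul (by positivity) (by positivity), ← log_mul (by positivity) (by positivity)] at hlog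
  exact (log_le_log_iff (by positivity) (by positivity)).1 hlog

theorem Gamma_add_mul_Gamma_div_le {p q μ : ℝ} (hp : 0 < p) (hpq : p ≤ q) (hμ : 1 ≤ μ) :
    Gamma (μ + p) * Gamma q / (Gamma p * Gamma (μ + q)) ≤ p / q := by
  have hq : 0 < q := hp.trans_le hpq
  have h := Gamma_mul_Gamma_le_of_add_eq (A := p + 1) (B := μ + q) (x := μ + p) (y := q + 1)
    (by positivity) (by linarith) (by linarith) (by ring)
  rw [Gamma_add_one hq.ne', Gamma_add_one hp.ne'] at h
  rw [div_le_div_iff₀ (by positivity) hq]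
  linarith

end Real

-- Equality holds at `t = s`, where both sides telescope to `∏ j ∈ range (k + 1), (1 + j * s)`.
theorem mul_add_one_mul_prod_le_prod_add {s t : ℝ} (ht : 0 ≤ t) (hts : t ≤ s) (k : ℕ) :
    (k * s + 1) * ∏ j ∈ range k, (1 + j * t) ≤ ∏ j ∈ range k, (1 + j * t + s) := by
  induction k with
  | zero => simp
  | succ k ih =>
    have hP : 0 ≤ ∏ j ∈ range k, (1 + j * t) := prod_nonneg fun j _ => by positivity
    have hstep : ((k + 1 : ℕ) * s + 1) * (1 + k * t) ≤ (k * s + 1) * (1 + k * t + s) := by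
      push_cast
      nlinarith [mul_nonneg (mul_nonneg k.cast_nonneg (ht.trans hts)) (sub_nonneg.2 hts)]
    rw [prod_range_succ, prod_range_succ]
    calc ((k + 1 : ℕ) * s + 1) * ((∏ j ∈ range k, (1 + j * t)) * (1 + k * t))
        = (((k + 1 : ℕ) * s + 1) * (1 + k * t)) * ∏ j ∈ range k, (1 + j * t) := by ring
      _ ≤ ((k * s + 1) * (1 + k * t + s)) * ∏ j ∈ range k, (1 + j * t) := by gcongr
      _ = ((k * s + 1) * ∏ j ∈ range k, (1 + j * t)) * (1 + k * t + s) := by ring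
      _ ≤ (∏ j ∈ range k, (1 + j * t + s)) * (1 + k * t + s) := by
        gcongr
        nlinarith [mul_nonneg k.cast_nonneg ht]

theorem prod_div_add_lt_one_div {s t : ℝ} (ht : 0 ≤ t) (hts : t < s) {k : ℕ} (hk : 2 ≤ k) :
    ∏ j ∈ range k, (1 + j * t) / (1 + j * t + s) < 1 / (k * s + 1) := by
  obtain ⟨m, rfl⟩ : ∃ m, k = m + 1 := ⟨k - 1, by omega⟩
  have hm : (1 : ℝ) ≤ m := by exact_mod_cast (by omega : 1 ≤ m)
  have hs : 0 < s := ht.trans_lt hts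
  have hP : 0 < ∏ j ∈ range m, (1 + j * t) := prod_pos fun j _ => by positivity
  have hstep : ((m + 1 : ℕ) * s + 1) * (1 + m * t) < (m * s + 1) * (1 + m * t + s) := by
    push_cast
    nlinarith [mul_pos (mul_pos (zero_lt_one.trans_le hm) hs) (sub_pos.2 hts)]
  rw [prod_div_distrib, div_lt_div_iff₀ (prod_pos fun j _ => by positivity) (by positivity),
    prod_range_succ, prod_range_succ, one_mul]
  calc (∏ j ∈ range m, (1 + j * t)) * (1 + m * t) * ((m + 1 : ℕ) * s + 1)
      = (((m + 1 : ℕ) * s + 1) * (1 + m * t)) * ∏ j ∈ range m, (1 + j * t) := by ring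
    _ < ((m * s + 1) * (1 + m * t + s)) * ∏ j ∈ range m, (1 + j * t) := by gcongr
    _ = ((m * s + 1) * ∏ j ∈ range m, (1 + j * t)) * (1 + m * t + s) := by ring
    _ ≤ (∏ j ∈ range m, (1 + j * t + s)) * (1 + m * t + s) := by
      gcongr
      exact mul_add_one_mul_prod_le_prod_add ht hts.le m

theorem stmt_18_general (r : ℕ) (hr : 2 ≤ r) (a b : ℝ) (ha : 0 ≤ a) (hb : 0 ≤ b)
    (n : ℝ) (hn : n = (r : ℝ) * (b + 1 + (a / 2) * ((r : ℝ) - 1)))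
    (μ : ℝ)
    (heq : (∏ j ∈ Finset.range r,
        (Real.Gamma (μ + 1 + (j : ℝ) * (a / 2)) *
            Real.Gamma (b + 2 + ((r : ℝ) - 1 + (j : ℝ)) * (a / 2))) /
          (Real.Gamma (1 + (j : ℝ) * (a / 2)) *
            Real.Gamma (μ + b + 2 + ((r : ℝ) - 1 + (j : ℝ)) * (a / 2)))) =
      μ ^ n / (n + 1)) :
    μ < 1 := by
  by_contra! hμ
  have hμ0 : 0 < μ := by linarith
  set t := a / 2
  set s := b + 1 + ((r : ℝ) - 1) * t
  have ht : 0 ≤ t := by positivity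
  have hr' : (2 : ℝ) ≤ r := by exact_mod_cast hr
  have hts : t < s := by nlinarith
  have hs : 0 < s := ht.trans_lt hts
  have hn' : n = r * s := by rw [hn]; ring
  have hn0 : 0 ≤ n := by rw [hn']; positivity
  have hshift : ∀ j : ℕ, b + 2 + ((r : ℝ) - 1 + j) * t = 1 + j * t + s := fun j => by ring
  have hshift' : ∀ j : ℕ, μ + b + 2 + ((r : ℝ) - 1 + j) * t = μ + (1 + j * t + s) :=
    fun j => by ring
  simp only [hshift, hshift', add_assoc μ 1] at heq
  refine lt_irrefl (μ ^ n / (n + 1)) ?_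
  calc μ ^ n / (n + 1)
      ≤ ∏ j ∈ range r, (1 + j * t) / (1 + j * t + s) :=
        heq ▸ prod_le_prod (fun j _ => by positivity) fun j _ =>
          Real.Gamma_add_mul_Gamma_div_le (by positivity) (by linarith) hμ
    _ < 1 / (n + 1) := by rw [hn']; exact prod_div_add_lt_one_div ht hts hr
    _ ≤ μ ^ n / (n + 1) := by gcongr; exact Real.one_le_rpow hμ hn0

theorem stmt_18 (r : ℕ) (hr : 2 ≤ r) (a b : ℝ) (ha : 0 ≤ a) (hb : 0 ≤ b)
    (n : ℝ) (hn : n = (r : ℝ) * (b + 1 + (a / 2) * ((r : ℝ) - 1)))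
    (μ : ℝ) (hμ : 0 < μ)
    (heq : (∏ j ∈ Finset.range r,
        (Real.Gamma (μ + 1 + (j : ℝ) * (a / 2)) *
            Real.Gamma (b + 2 + ((r : ℝ) - 1 + (j : ℝ)) * (a / 2))) /
          (Real.Gamma (1 + (j : ℝ) * (a / 2)) *
            Real.Gamma (μ + b + 2 + ((r : ℝ) - 1 + (j : ℝ)) * (a / 2)))) =
      μ ^ n / (n + 1)) :
    μ < 1 :=
  stmt_18_general r hr a b ha hb n hn μ heq
end
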